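/- Let α > 0 and let u : [0,1] → ℝ satisfy u(1-x) + (1-x)^α · u(y/(1-x)) = u(y) + (1-y)^α · u((1-x-y)/(1-y)) for all x, y ∈ [0,1) with x + y ≤ 1. Define h : [0,1] → ℝ by h(x) = u(x) − u(1−x). Then for every z ∈ [1/2, 1], h(z) = z^α · h(2 − 1/z) and h(z) = − z^α · h(1/z − 1); in particular h(1/2) = 0. -/

import Mathlib

/-! Specialising the functional equation to `x = y = 1 - z` gives
`u z + z^α u(1/z - 1) = u(1 - z) + z^α u(1 - (1/z - 1))`, which is `h z = -z^α h(1/z - 1)`.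
The other identity follows since `h (1 - x) = -h x`, and `h(1/2) = 0` is that antisymmetry at
`x = 1/2`. -/

def FundamentalEquation (α : ℝ) (u : ℝ → ℝ) : Prop :=
  ∀ x y : ℝ, 0 ≤ x → x < 1 → 0 ≤ y → y < 1 → x + y ≤ 1 →
    u (1 - x) + (1 - x) ^ α * u (y / (1 - x)) = u y + (1 - y) ^ α * u ((1 - x - y) / (1 - y))

section

variable {α : ℝ} {u h : ℝ → ℝ}

lemma apply_one_sub_eq_neg (hh : ∀ x, h x = u x - u (1 - x)) (x : ℝ) : h (1 - x) = -h x := by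
  rw [hh, hh, sub_sub_cancel]
  ring

lemma FundamentalEquation.eq_neg_rpow_mul (heq : FundamentalEquation α u)
    (hh : ∀ x, h x = u x - u (1 - x)) {z : ℝ} (hz₁ : 1 / 2 ≤ z) (hz₂ : z ≤ 1) :
    h z = -(z ^ α) * h (1 / z - 1) := by
  have hz₀ : z ≠ 0 := by positivity
  have e := heq (1 - z) (1 - z) (by linarith) (by linarith) (by linarith) (by linarith)
    (by linarith)
  have hquot : (1 - z) / z = 1 / z - 1 := by field_simp
  have hquot' : (z - (1 - z)) / z = 1 - (1 / z - 1) := by field_simp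
  rw [sub_sub_cancel, hquot, hquot'] at e
  rw [hh, hh]
  linear_combination e

lemma FundamentalEquation.eq_rpow_mul (heq : FundamentalEquation α u)
    (hh : ∀ x, h x = u x - u (1 - x)) {z : ℝ} (hz₁ : 1 / 2 ≤ z) (hz₂ : z ≤ 1) :
    h z = z ^ α * h (2 - 1 / z) := by
  rw [heq.eq_neg_rpow_mul hh hz₁ hz₂, show 2 - 1 / z = 1 - (1 / z - 1) by ring,
    apply_one_sub_eq_neg hh]
  ring

end

theorem stmt7_general (α : ℝ) (u : ℝ → ℝ)
    (heq : ∀ x y : ℝ, 0 ≤ x → x < 1 → 0 ≤ y → y < 1 → x + y ≤ 1 →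
      u (1 - x) + (1 - x) ^ α * u (y / (1 - x))
        = u y + (1 - y) ^ α * u ((1 - x - y) / (1 - y)))
    (h : ℝ → ℝ) (hh : ∀ x : ℝ, h x = u x - u (1 - x)) :
    (∀ z : ℝ, 1 / 2 ≤ z → z ≤ 1 →
      h z = z ^ α * h (2 - 1 / z) ∧ h z = -(z ^ α) * h (1 / z - 1)) ∧
    h (1 / 2) = 0 := by
  have hsolves : FundamentalEquation α u := heq
  refine ⟨fun z hz₁ hz₂ =>
    ⟨hsolves.eq_rpow_mul hh hz₁ hz₂, hsolves.eq_neg_rpow_mul hh hz₁ hz₂⟩, ?_⟩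
  have hhalf := apply_one_sub_eq_neg hh (1 / 2)
  norm_num at hhalf
  linarith

/-- For `α > 0` and `u` a solution of the fundamental functional equation, the
function `h(x) = u(x) - u(1-x)` satisfies `h(z) = z^α h(2 - 1/z)` and `h(z) = -z^α h(1/z - 1)`
for every `z ∈ [1/2, 1]`; in particular `h(1/2) = 0`. -/
theorem stmt7 (α : ℝ) (hα : 0 < α) (u : ℝ → ℝ)
    (heq : ∀ x y : ℝ, 0 ≤ x → x < 1 → 0 ≤ y → y < 1 → x + y ≤ 1 →
      u (1 - x) + (1 - x) ^ α * u (y / (1 - x))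
        = u y + (1 - y) ^ α * u ((1 - x - y) / (1 - y)))
    (h : ℝ → ℝ) (hh : ∀ x : ℝ, h x = u x - u (1 - x)) :
    (∀ z : ℝ, 1 / 2 ≤ z → z ≤ 1 →
      h z = z ^ α * h (2 - 1 / z) ∧ h z = -(z ^ α) * h (1 / z - 1)) ∧
    h (1 / 2) = 0 :=
  stmt7_general α u heq h hh
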